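/- Let M = (m_1,...,m_k) be a super-increasing tuple of positive integers with m_k ≥ 2, and let I and J be distinct allowable sub-tuples for M. Then n⁺(M_I) − n⁻(M_I) ≠ n⁺(M_J) − n⁻(M_J). -/

import Mathlib

/-- Continued fraction value of a list of rationals:
`cf [n₁,...,n_k] = 1/(n₁ + 1/(n₂ + ... + 1/n_k))`. -/
def cf : List ℚ → ℚ
  | [] => 0
  | n :: L => 1 / (n + cf L)

/-- The alternating sequence `-2, 2, -2, 2, ..., ±2` of length `n`. -/
def altSeq (n : ℕ) : List ℤ :=
  (List.range n).map (fun j => (-1 : ℤ) ^ (j + 1) * 2)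

/-- The `i`-th entry (1-based) of the tuple `M`. -/
def ent (M : List ℕ) (i : ℕ) : ℕ := M.getD (i - 1) 0

/-- `I` is an allowable sub-tuple for the tuple `M` of positive integers:
a strictly increasing tuple of indices in `{1,...,k}` with consecutive
gaps at least 2, such that for every index `i` with `m_i = 1` at least
one of `i-1, i, i+1` belongs to `I`. -/
def IsAllowable (M : List ℕ) (I : List ℕ) : Prop :=
  I.Chain' (fun a b => a + 2 ≤ b) ∧
  (∀ i ∈ I, 1 ≤ i ∧ i ≤ M.length) ∧
  (∀ i, 1 ≤ i → i ≤ M.length → ent M i = 1 → (i - 1 ∈ I ∨ i ∈ I ∨ i + 1 ∈ I))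

/-- The sign `∏_{i' ∈ I, i' < i} (-1)^(m_{i'})` adjusting the entries coming
from position `i` of `M`. -/
def subSign (M : List ℕ) (I : List ℕ) (i : ℕ) : ℤ :=
  ((I.filter (fun i' => decide (i' < i))).map (fun i' => (-1 : ℤ) ^ ent M i')).prod

/-- Before sign adjustment, the block of entries of `M_I` coming from position `i`
of `M`: either the alternating sequence `-2,2,...,±2` of length `m_i - 1`
(if `i ∈ I`), or the single entry `m_i` increased by 1 for each neighbor of `i`
lying in `I`. -/
def block (M : List ℕ) (I : List ℕ) (i : ℕ) : List ℤ :=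
  if i ∈ I then altSeq (ent M i - 1)
  else [(ent M i : ℤ) + (if i - 1 ∈ I then 1 else 0) + (if i + 1 ∈ I then 1 else 0)]

/-- The continued fraction expansion `M_I` associated to an allowable sub-tuple `I`
of `M`. -/
def MI (M : List ℕ) (I : List ℕ) : List ℤ :=
  ((List.range M.length).map (fun idx =>
    (block M I (idx + 1)).map (fun q => subSign M I (idx + 1) * q))).flatten

/-- `n⁺(N) = #{i : (-1)^(i+1) n_i > 0}` (1-based `i`). -/
def nplus (N : List ℤ) : ℕ :=
  ((List.range N.length).filter
    (fun idx => decide (0 < (-1 : ℤ) ^ idx * N.getD idx 0))).length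

/-- `n⁻(N) = #{i : (-1)^(i+1) n_i < 0}` (1-based `i`). -/
def nminus (N : List ℤ) : ℕ :=
  ((List.range N.length).filter
    (fun idx => decide ((-1 : ℤ) ^ idx * N.getD idx 0 < 0))).length

/-- `Σ_{i ∈ I} (-1)^i m_i`. -/
def sgnSum (M : List ℕ) (I : List ℕ) : ℤ :=
  (I.map (fun i => (-1 : ℤ) ^ i * (ent M i : ℤ))).sum

/-- The dual sub-tuple `(k+1-i_j, ..., k+1-i_1)` of `I = (i_1,...,i_j)`. -/
def dualSub (k : ℕ) (I : List ℕ) : List ℕ :=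
  (I.map (fun i => k + 1 - i)).reverse

/-- `(m_1,...,m_k)` is super-increasing if `m_i > Σ_{j<i} m_j` for all `i`. -/
def SuperInc (M : List ℕ) : Prop :=
  ∀ i, 1 ≤ i → i ≤ M.length → (M.take (i - 1)).sum < ent M i

/-! The proof rests on two observations. First, `n⁺(N) - n⁻(N)` is the alternating sum
`Σ (-1)^i sign(n_i)`, and in `M_I` the sign twists `∏ (-1)^(m_{i'})` exactly compensate
the parities of the lengths `m_{i'} - 1` of the inserted alternating blocks, so every
position `i` of `M` contributes `(-1)^(i-1)` times the alternating sign sum of its block,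
namely `1`, or `1 - m_i` if `i ∈ I`. Hence
`n⁺(M_I) - n⁻(M_I) = Σ_{i ≤ k} (-1)^(i-1) + Σ_{i ∈ I} (-1)^i m_i`.
Second, for super-increasing weights a signed sum `Σ ε_i w_i` with `ε_i ∈ {-1, 0, 1}` can
only vanish trivially, because the largest index with `ε_i ≠ 0` dominates all the others. -/

def altSignSum : List ℤ → ℤ
  | [] => 0
  | a :: l => a.sign - altSignSum l

@[simp]
lemma altSignSum_nil : altSignSum [] = 0 := rfl

@[simp]
lemma altSignSum_cons (a : ℤ) (l : List ℤ) : altSignSum (a :: l) = a.sign - altSignSum l := rfl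

lemma altSignSum_append (L₁ L₂ : List ℤ) :
    altSignSum (L₁ ++ L₂) = altSignSum L₁ + (-1) ^ L₁.length * altSignSum L₂ := by
  induction L₁ with
  | nil => simp
  | cons a l ih =>
    simp only [List.cons_append, altSignSum_cons, ih, List.length_cons, pow_succ]
    ring

lemma altSignSum_map_mul {s : ℤ} (hs : s.sign = s) (L : List ℤ) :
    altSignSum (L.map (s * ·)) = s * altSignSum L := by
  induction L with
  | nil => simp
  | cons a l ih => simp only [List.map_cons, altSignSum_cons, ih, Int.sign_mul, hs]; ring

lemma altSeq_succ (n : ℕ) : altSeq (n + 1) = altSeq n ++ [(-1) ^ (n + 1) * 2] := by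
  simp [altSeq, List.range_succ]

lemma altSignSum_altSeq (n : ℕ) : altSignSum (altSeq n) = -n := by
  induction n with
  | zero => rfl
  | succ n ih =>
    have hsign : ((-1 : ℤ) ^ (n + 1) * 2).sign = (-1) ^ (n + 1) := by
      rcases neg_one_pow_eq_or ℤ (n + 1) with h | h <;> simp [h]
    have hlen : (altSeq n).length = n := by simp [altSeq]
    rw [altSeq_succ, altSignSum_append, ih, hlen, altSignSum_cons, altSignSum_nil, hsign,
      sub_zero, ← pow_add, show n + (n + 1) = 2 * n + 1 by ring, pow_succ, pow_mul]
    push_cast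
    ring

lemma neg_one_pow_succ_mul_getD_cons (a : ℤ) (N : List ℤ) (i : ℕ) :
    (-1) ^ (i + 1) * (a :: N).getD (i + 1) 0 = -((-1) ^ i * N.getD i 0) := by
  rw [List.getD_cons_succ, pow_succ]
  ring

lemma nplus_cons (a : ℤ) (N : List ℤ) :
    nplus (a :: N) = (if 0 < a then 1 else 0) + nminus N := by
  simp only [nplus, nminus, List.length_cons, List.range_succ_eq_map, List.filter_cons,
    List.filter_map, Function.comp_def, neg_one_pow_succ_mul_getD_cons, neg_pos]
  split_ifs <;> simp_all [add_comm]

lemma nminus_cons (a : ℤ) (N : List ℤ) :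
    nminus (a :: N) = (if a < 0 then 1 else 0) + nplus N := by
  simp only [nplus, nminus, List.length_cons, List.range_succ_eq_map, List.filter_cons,
    List.filter_map, Function.comp_def, neg_one_pow_succ_mul_getD_cons, neg_lt_zero]
  split_ifs <;> simp_all [add_comm]

lemma nplus_sub_nminus_eq_altSignSum (N : List ℤ) :
    (nplus N : ℤ) - nminus N = altSignSum N := by
  induction N with
  | nil => rfl
  | cons a l ih =>
    rw [nplus_cons, nminus_cons, altSignSum_cons, ← ih]
    rcases lt_trichotomy a 0 with h | rfl | h
    · simp [h, h.not_gt, Int.sign_eq_neg_one_of_neg h]; ring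
    · simp
    · simp [h, h.not_gt, Int.sign_eq_one_of_pos h]; ring

lemma subSign_sign (M I : List ℕ) (i : ℕ) : (subSign M I i).sign = subSign M I i := by
  unfold subSign
  induction I.filter (· < i) with
  | nil => rfl
  | cons a t ih =>
    rcases neg_one_pow_eq_or ℤ (ent M a) with h | h <;> simp [h, ih]

lemma subSign_one {M I : List ℕ} (hI : ∀ i ∈ I, 1 ≤ i) : subSign M I 1 = 1 := by
  rw [subSign, List.filter_eq_nil_iff.mpr fun x hx => by have := hI x hx; simp; omega]
  rfl

lemma subSign_succ (M : List ℕ) {I : List ℕ} (hI : I.Nodup) (i : ℕ) :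
    subSign M I (i + 1) = subSign M I i * if i ∈ I then (-1) ^ ent M i else 1 := by
  rw [subSign, subSign, ← List.prod_toFinset _ (hI.filter _),
    ← List.prod_toFinset _ (hI.filter _), List.toFinset_filter, List.toFinset_filter,
    Finset.prod_filter, Finset.prod_filter]
  have hlast : (if i ∈ I then (-1) ^ ent M i else 1) =
      ∏ x ∈ I.toFinset, if x = i then (-1 : ℤ) ^ ent M x else 1 := by
    simp [Finset.prod_ite_eq']
  rw [hlast, ← Finset.prod_mul_distrib]
  refine Finset.prod_congr rfl fun x _ => ?_
  by_cases hx : x = i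
  · simp [hx]
  · by_cases hxi : x < i
    · simp [hx, hxi, Nat.lt_succ_of_lt hxi]
    · simp [hx, hxi, show ¬ x < i + 1 by omega]

lemma length_block (M I : List ℕ) (i : ℕ) :
    (block M I i).length = if i ∈ I then ent M i - 1 else 1 := by
  unfold block
  split_ifs <;> simp [altSeq]

lemma altSignSum_block {M : List ℕ} (I : List ℕ) {i : ℕ} (hm : 0 < ent M i) :
    altSignSum (block M I i) = if i ∈ I then 1 - (ent M i : ℤ) else 1 := by
  unfold block
  by_cases hi : i ∈ I
  · rw [if_pos hi, if_pos hi, altSignSum_altSeq]; omega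
  · rw [if_neg hi, if_neg hi]
    simp only [altSignSum_cons, altSignSum_nil, sub_zero, Int.sign_eq_one_iff_pos]
    positivity

lemma neg_one_pow_length_block_mul {M : List ℕ} (I : List ℕ) {i : ℕ} (hm : 0 < ent M i) :
    (-1) ^ (block M I i).length * (if i ∈ I then (-1) ^ ent M i else 1) = -1 := by
  rw [length_block]
  split_ifs
  · obtain ⟨m, hm'⟩ : ∃ m, ent M i = m + 1 := ⟨_, (Nat.succ_pred_eq_of_pos hm).symm⟩
    rw [hm', Nat.add_sub_cancel, pow_succ, ← mul_assoc, ← pow_add, ← two_mul, pow_mul]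
    norm_num
  · simp

def prefixMI (M I : List ℕ) (n : ℕ) : List ℤ :=
  ((List.range n).map fun idx =>
    (block M I (idx + 1)).map fun q => subSign M I (idx + 1) * q).flatten

lemma prefixMI_succ (M I : List ℕ) (n : ℕ) :
    prefixMI M I (n + 1) =
      prefixMI M I n ++ (block M I (n + 1)).map fun q => subSign M I (n + 1) * q := by
  simp [prefixMI, List.range_succ]

lemma ent_succ_pos {M : List ℕ} (hpos : ∀ m ∈ M, 0 < m) {j : ℕ} (hj : j < M.length) :
    0 < ent M (j + 1) := by
  rw [ent, Nat.add_sub_cancel, List.getD_eq_getElem _ _ hj]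
  exact hpos _ (List.getElem_mem hj)

section PrefixMI

variable {M I : List ℕ} (hpos : ∀ m ∈ M, 0 < m) (hI : I.Nodup)
include hpos hI

lemma neg_one_pow_length_prefixMI_mul_subSign {n : ℕ} (hn : n ≤ M.length) :
    (-1) ^ (prefixMI M I n).length * subSign M I (n + 1) = (-1) ^ n * subSign M I 1 := by
  induction n with
  | zero => simp [prefixMI]
  | succ n ih =>
    have hflip := neg_one_pow_length_block_mul I (ent_succ_pos hpos (j := n) (by omega))
    rw [prefixMI_succ, List.length_append, List.length_map, pow_add, subSign_succ M hI]
    linear_combination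
      (-1) ^ (prefixMI M I n).length * subSign M I (n + 1) * hflip - ih (by omega)

lemma altSignSum_prefixMI {n : ℕ} (hn : n ≤ M.length) :
    altSignSum (prefixMI M I n) = subSign M I 1 *
      ∑ j ∈ Finset.range n, (-1) ^ j * if j + 1 ∈ I then 1 - (ent M (j + 1) : ℤ) else 1 := by
  induction n with
  | zero => simp [prefixMI]
  | succ n ih =>
    rw [prefixMI_succ, altSignSum_append, altSignSum_map_mul (subSign_sign _ _ _),
      altSignSum_block I (ent_succ_pos hpos (by omega)), ← mul_assoc,
      neg_one_pow_length_prefixMI_mul_subSign hpos hI (by omega), ih (by omega),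
      Finset.sum_range_succ]
    ring

end PrefixMI

lemma IsAllowable.pairwise_lt {M I : List ℕ} (hI : IsAllowable M I) : I.Pairwise (· < ·) :=
  (hI.1.imp fun h => by omega).pairwise

lemma IsAllowable.nodup {M I : List ℕ} (hI : IsAllowable M I) : I.Nodup :=
  hI.pairwise_lt.nodup

lemma sgnSum_eq_sum_range {M I : List ℕ} (hI : IsAllowable M I) :
    sgnSum M I = ∑ j ∈ Finset.range M.length,
      if j + 1 ∈ I then (-1) ^ (j + 1) * (ent M (j + 1) : ℤ) else 0 := by
  have hI' : I.toFinset = (Finset.Ico 1 (M.length + 1)).filter (· ∈ I) := by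
    ext i
    simp only [List.mem_toFinset, Finset.mem_filter, Finset.mem_Ico, iff_and_self]
    exact fun hi => ⟨(hI.2.1 i hi).1, by have := (hI.2.1 i hi).2; omega⟩
  rw [sgnSum, ← List.sum_toFinset _ hI.nodup, hI', Finset.sum_filter,
    Finset.sum_Ico_eq_sum_range, Nat.add_sub_cancel]
  simp_rw [add_comm 1]

lemma nplus_sub_nminus_MI {M I : List ℕ} (hpos : ∀ m ∈ M, 0 < m) (hI : IsAllowable M I) :
    (nplus (MI M I) : ℤ) - nminus (MI M I) =
      ∑ j ∈ Finset.range M.length, (-1) ^ j + sgnSum M I := by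
  rw [nplus_sub_nminus_eq_altSignSum, show MI M I = prefixMI M I M.length from rfl,
    altSignSum_prefixMI hpos hI.nodup le_rfl, subSign_one fun i hi => (hI.2.1 i hi).1, one_mul,
    sgnSum_eq_sum_range hI, ← Finset.sum_add_distrib]
  refine Finset.sum_congr rfl fun j _ => ?_
  split_ifs <;> ring

lemma eq_zero_of_sum_mul_eq_zero_of_superIncreasing {ι : Type*} [LinearOrder ι] (s : Finset ι)
    {w ε : ι → ℤ} (hw : ∀ i ∈ s, ∑ j ∈ s with j < i, |w j| < |w i|)
    (hε : ∀ i ∈ s, |ε i| ≤ 1) (hsum : ∑ i ∈ s, ε i * w i = 0) : ∀ i ∈ s, ε i = 0 := by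
  classical
  induction s using Finset.induction_on_max with
  | empty => simp
  | insert a s ha ih =>
    have has : a ∉ s := fun h => lt_irrefl a (ha a h)
    rw [Finset.sum_insert has] at hsum
    have hdom : ∑ j ∈ s, |w j| < |w a| := by
      have := hw a (Finset.mem_insert_self a s)
      rwa [Finset.filter_insert, if_neg (lt_irrefl a), Finset.filter_true_of_mem ha] at this
    have hεa : ε a = 0 := by
      by_contra h
      have h1 : |ε a| = 1 := le_antisymm (hε a (Finset.mem_insert_self a s)) (Int.one_le_abs h)
      have : |w a| ≤ ∑ j ∈ s, |w j| := calc
        |w a| = |ε a * w a| := by rw [abs_mul, h1, one_mul]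
        _ = |∑ i ∈ s, ε i * w i| := by rw [eq_neg_of_add_eq_zero_left hsum, abs_neg]
        _ ≤ ∑ i ∈ s, |ε i * w i| := Finset.abs_sum_le_sum_abs _ _
        _ ≤ ∑ i ∈ s, |w i| := Finset.sum_le_sum fun i hi => by
          rw [abs_mul]
          exact mul_le_of_le_one_left (abs_nonneg _) (hε i (Finset.mem_insert_of_mem hi))
      omega
    rw [hεa, zero_mul, zero_add] at hsum
    have hw' : ∀ i ∈ s, ∑ j ∈ s with j < i, |w j| < |w i| := by
      intro i hi
      have := hw i (Finset.mem_insert_of_mem hi)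
      rwa [Finset.filter_insert, if_neg (ha i hi).not_gt] at this
    intro i hi
    rcases Finset.mem_insert.mp hi with rfl | hi
    · exact hεa
    · exact ih hw' (fun j hj => hε j (Finset.mem_insert_of_mem hj)) hsum i hi

lemma sum_take_eq_sum_range_ent (M : List ℕ) {n : ℕ} (hn : n ≤ M.length) :
    (M.take n).sum = ∑ j ∈ Finset.range n, ent M (j + 1) := by
  induction n with
  | zero => simp
  | succ n ih =>
    rw [List.sum_take_succ M n (by omega), Finset.sum_range_succ, ih (by omega), ent,
      Nat.add_sub_cancel, List.getD_eq_getElem _ _ (by omega)]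

lemma SuperInc.sum_range_lt {M : List ℕ} (hM : SuperInc M) {i : ℕ} (hi : i < M.length) :
    ∑ j ∈ Finset.range i, ent M (j + 1) < ent M (i + 1) := by
  simpa [← sum_take_eq_sum_range_ent M hi.le] using hM (i + 1) (by omega) hi

lemma eq_of_sgnSum_eq {M I J : List ℕ} (hM : SuperInc M) (hI : IsAllowable M I)
    (hJ : IsAllowable M J) (h : sgnSum M I = sgnSum M J) : I = J := by
  have hmem : ∀ j < M.length, j + 1 ∈ I ↔ j + 1 ∈ J := by
    have := eq_zero_of_sum_mul_eq_zero_of_superIncreasing (Finset.range M.length)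
      (w := fun j => (-1) ^ (j + 1) * (ent M (j + 1) : ℤ))
      (ε := fun j => (if j + 1 ∈ I then 1 else 0) - if j + 1 ∈ J then 1 else 0) ?_ ?_ ?_
    · intro j hj
      have := this j (Finset.mem_range.mpr hj)
      split_ifs at this <;> simp_all
    · intro i hi
      have hfilter : (Finset.range M.length).filter (· < i) = Finset.range i := by
        ext j; simp only [Finset.mem_filter, Finset.mem_range] at hi ⊢; omega
      simp only [abs_mul, abs_pow, abs_neg, abs_one, one_pow, one_mul, Nat.abs_cast, hfilter]
      exact_mod_cast hM.sum_range_lt (Finset.mem_range.mp hi)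
    · intro i _
      split_ifs <;> simp
    · rw [sgnSum_eq_sum_range hI, sgnSum_eq_sum_range hJ, ← sub_eq_zero,
        ← Finset.sum_sub_distrib] at h
      refine (Finset.sum_congr rfl fun j _ => ?_).trans h
      split_ifs <;> ring
  refine hI.pairwise_lt.eq_of_mem_iff hJ.pairwise_lt fun i => ⟨fun hi => ?_, fun hi => ?_⟩
  · obtain ⟨j, rfl⟩ : ∃ j, i = j + 1 := ⟨i - 1, by have := hI.2.1 i hi; omega⟩
    exact (hmem j (by have := hI.2.1 _ hi; omega)).mp hi
  · obtain ⟨j, rfl⟩ : ∃ j, i = j + 1 := ⟨i - 1, by have := hJ.2.1 i hi; omega⟩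
    exact (hmem j (by have := hJ.2.1 _ hi; omega)).mpr hi

theorem nplus_sub_nminus_injective_of_superInc_general (M : List ℕ)
    (hpos : ∀ m ∈ M, 0 < m) (hsuper : SuperInc M)
    (I J : List ℕ) (hI : IsAllowable M I) (hJ : IsAllowable M J) (hne : I ≠ J) :
    (nplus (MI M I) : ℤ) - (nminus (MI M I) : ℤ) ≠
      (nplus (MI M J) : ℤ) - (nminus (MI M J) : ℤ) := by
  rw [nplus_sub_nminus_MI hpos hI, nplus_sub_nminus_MI hpos hJ, Ne, add_right_inj]
  exact fun h => hne (eq_of_sgnSum_eq hsuper hI hJ h)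

/-- Theorem 4.4 of the paper (numerical form): for a super-increasing tuple `M`
of positive integers with last entry `≥ 2`, distinct allowable sub-tuples give
distinct values of `n⁺ - n⁻`, hence no repeated boundary slopes. -/
theorem nplus_sub_nminus_injective_of_superInc (M : List ℕ)
    (hpos : ∀ m ∈ M, 0 < m) (hsuper : SuperInc M) (hlast : 2 ≤ M.getLastD 0)
    (I J : List ℕ) (hI : IsAllowable M I) (hJ : IsAllowable M J) (hne : I ≠ J) :
    (nplus (MI M I) : ℤ) - (nminus (MI M I) : ℤ) ≠
      (nplus (MI M J) : ℤ) - (nminus (MI M J) : ℤ) :=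
  nplus_sub_nminus_injective_of_superInc_general M hpos hsuper I J hI hJ hne
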